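/- Fix m ≥ 0 and consider symmetric noncrossing perfect matchings M on [±m] with at most one trivial block (a block {i,−i}). The number of such matchings equals the Catalan number C_k = (1/(k+1))·C(2k,k), where k = ⌈m/2⌉. -/

import Mathlib

/-- The set `[±m] = {-m, …, -1, 1, …, m}`. -/
def pmSet (m : ℕ) : Set ℤ := {i | i ≠ 0 ∧ |i| ≤ (m : ℤ)}

/-- A symmetric noncrossing perfect matching on `[±m]`. -/
def IsNCSP (m : ℕ) (M : Finset (Finset ℤ)) : Prop :=
  (∀ b ∈ M, b.card = 2 ∧ (b : Set ℤ) ⊆ pmSet m) ∧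
  (∀ b ∈ M, ∀ b' ∈ M, b ≠ b' → Disjoint b b') ∧
  (∀ i ∈ pmSet m, ∃ b ∈ M, i ∈ b) ∧
  (∀ b ∈ M, b.image (fun x => -x) ∈ M) ∧
  (∀ i j k l : ℤ, ({i, k} : Finset ℤ) ∈ M → ({j, l} : Finset ℤ) ∈ M →
    i < j → j < k → k < l → False)

/-! A block `{u, v}` with `u < 0 < v` and `v ≠ -u` would cross its mirror image, so the blocks of a
symmetric noncrossing matching of `[±m]` are positive blocks, their mirror images, and trivial
blocks `{t, -t}`. Folding by `x ↦ max x 0` turns the single trivial block `{t, -t}` into `{0, t}`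
and gives a bijection with the noncrossing perfect matchings of `{1, …, m}` when `m` is even and
of `{0, …, m}` when `m` is odd; by parity, no other case occurs. Removing the block that contains
the leftmost point gives the Catalan recursion for noncrossing perfect matchings of an interval. -/

open Finset Pointwise

structure IsNCMatching (s : Finset ℤ) (M : Finset (Finset ℤ)) : Prop where
  card_eq_two : ∀ b ∈ M, #b = 2
  subset : ∀ b ∈ M, b ⊆ s
  disjoint : ∀ b ∈ M, ∀ b' ∈ M, b ≠ b' → Disjoint b b'
  exists_mem : ∀ x ∈ s, ∃ b ∈ M, x ∈ b
  noncrossing : ∀ i j k l : ℤ, {i, k} ∈ M → {j, l} ∈ M → i < j → j < k → k < l → False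

lemma exists_lt_and_eq_pair_of_card_eq_two {b : Finset ℤ} (hb : #b = 2) :
    ∃ u v, u < v ∧ b = {u, v} := by
  obtain ⟨u, v, huv, rfl⟩ := card_eq_two.mp hb
  rcases huv.lt_or_gt with h | h
  · exact ⟨u, v, h, rfl⟩
  · exact ⟨v, u, h, pair_comm u v⟩

lemma eq_and_eq_of_pair_eq_pair {i k x y : ℤ} (hik : i < k) (hxy : x < y)
    (h : ({i, k} : Finset ℤ) = {x, y}) : i = x ∧ k = y := by
  have hi : i ∈ ({x, y} : Finset ℤ) := h ▸ by simp
  have hk : k ∈ ({x, y} : Finset ℤ) := h ▸ by simp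
  simp only [mem_insert, mem_singleton] at hi hk
  omega

lemma pair_subset_Ioo_or_disjoint_Icc_iff {u v x y : ℤ} :
    ({u, v} : Finset ℤ) ⊆ Ioo x y ∨ Disjoint {u, v} (Icc x y) ↔
      (x < u ∧ u < y ∧ x < v ∧ v < y) ∨ ((u < x ∨ y < u) ∧ (v < x ∨ y < v)) := by
  simp only [disjoint_insert_left, disjoint_singleton_left, insert_subset_iff,
    singleton_subset_iff, mem_Ioo, mem_Icc]
  omega

namespace IsNCMatching

variable {s t : Finset ℤ} {M N : Finset (Finset ℤ)}

lemma even_card (hM : IsNCMatching s M) : Even #s := by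
  have hs : s = M.biUnion fun b => b := by
    ext x
    simp only [mem_biUnion]
    exact ⟨hM.exists_mem x, fun ⟨b, hb, hx⟩ => hM.subset b hb hx⟩
  rw [hs, card_biUnion fun b hb b' hb' => hM.disjoint b hb b' hb', sum_congr rfl hM.card_eq_two]
  simp

lemma exists_pair_mem (hM : IsNCMatching s M) {x : ℤ} (hx : x ∈ s) :
    ∃ y ∈ s, y ≠ x ∧ {x, y} ∈ M := by
  obtain ⟨b, hb, hxb⟩ := hM.exists_mem x hx
  obtain ⟨u, v, huv, rfl⟩ := Finset.card_eq_two.mp (hM.card_eq_two b hb)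
  have hsub := hM.subset _ hb
  rcases mem_insert.mp hxb with rfl | hxv
  · exact ⟨v, hsub (by simp), huv.symm, hb⟩
  · obtain rfl := mem_singleton.mp hxv
    exact ⟨u, hsub (by simp), huv, pair_comm u x ▸ hb⟩

lemma subset_Ioo_or_disjoint_Icc (hM : IsNCMatching s M) {x y : ℤ} (hxy : x < y)
    (hxyM : {x, y} ∈ M) {b : Finset ℤ} (hb : b ∈ M) (hne : b ≠ {x, y}) :
    b ⊆ Ioo x y ∨ Disjoint b (Icc x y) := by
  obtain ⟨u, v, huv, rfl⟩ := exists_lt_and_eq_pair_of_card_eq_two (hM.card_eq_two b hb)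
  have hdisj := hM.disjoint _ hb _ hxyM hne
  have h₁ : ¬(u < x ∧ x < v ∧ v < y) := fun h => hM.noncrossing u x v y hb hxyM h.1 h.2.1 h.2.2
  have h₂ : ¬(x < u ∧ u < y ∧ y < v) := fun h => hM.noncrossing x u y v hxyM hb h.1 h.2.1 h.2.2
  simp only [disjoint_insert_left, disjoint_singleton_left, mem_insert, mem_singleton] at hdisj
  rw [pair_subset_Ioo_or_disjoint_Icc_iff]
  omega

protected lemma insert (hM : IsNCMatching s M) {x y : ℤ} (hxy : x < y) (hx : x ∉ s) (hy : y ∉ s)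
    (hsep : ∀ b ∈ M, b ⊆ Ioo x y ∨ Disjoint b (Icc x y)) :
    IsNCMatching (insert x (insert y s)) (insert {x, y} M) where
  card_eq_two b hb := by
    rcases mem_insert.mp hb with rfl | hb
    exacts [card_pair hxy.ne, hM.card_eq_two b hb]
  subset b hb := by
    rcases mem_insert.mp hb with rfl | hb
    · exact insert_subset_insert _ (singleton_subset_iff.mpr (mem_insert_self _ _))
    · exact (hM.subset b hb).trans ((subset_insert _ _).trans (subset_insert _ _))
  disjoint b hb b' hb' hne := by
    have hxy_disj : ∀ c ∈ M, Disjoint {x, y} c := fun c hc => by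
      simp only [disjoint_insert_left, disjoint_singleton_left]
      exact ⟨fun h => hx (hM.subset c hc h), fun h => hy (hM.subset c hc h)⟩
    rcases mem_insert.mp hb with rfl | hb <;> rcases mem_insert.mp hb' with rfl | hb'
    · exact absurd rfl hne
    · exact hxy_disj b' hb'
    · exact (hxy_disj b hb).symm
    · exact hM.disjoint b hb b' hb' hne
  exists_mem z hz := by
    rcases mem_insert.mp hz with rfl | hz
    · exact ⟨{z, y}, mem_insert_self _ _, by simp⟩
    rcases mem_insert.mp hz with rfl | hz
    · exact ⟨{x, z}, mem_insert_self _ _, by simp⟩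
    obtain ⟨b, hb, hzb⟩ := hM.exists_mem z hz
    exact ⟨b, mem_insert_of_mem hb, hzb⟩
  noncrossing i j k l hik hjl hij hjk hkl := by
    have hsep' (u v) (huv : {u, v} ∈ M) := pair_subset_Ioo_or_disjoint_Icc_iff.mp (hsep _ huv)
    rcases mem_insert.mp hik with hik | hik <;> rcases mem_insert.mp hjl with hjl | hjl
    · have := eq_and_eq_of_pair_eq_pair (hij.trans hjk) hxy hik
      have := eq_and_eq_of_pair_eq_pair (hjk.trans hkl) hxy hjl
      omega
    · have := eq_and_eq_of_pair_eq_pair (hij.trans hjk) hxy hik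
      have := hsep' j l hjl
      omega
    · have := eq_and_eq_of_pair_eq_pair (hjk.trans hkl) hxy hjl
      have := hsep' i k hik
      omega
    · exact hM.noncrossing i j k l hik hjl hij hjk hkl

protected lemma union (hM : IsNCMatching s M) (hN : IsNCMatching t N)
    (hlt : ∀ x ∈ s, ∀ y ∈ t, x < y) : IsNCMatching (s ∪ t) (M ∪ N) where
  card_eq_two b hb := (mem_union.mp hb).elim (hM.card_eq_two b) (hN.card_eq_two b)
  subset b hb := (mem_union.mp hb).elim (fun hb => (hM.subset b hb).trans subset_union_left)
    (fun hb => (hN.subset b hb).trans subset_union_right)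
  disjoint b hb b' hb' hne := by
    have across : ∀ c ∈ M, ∀ c' ∈ N, Disjoint c c' := fun c hc c' hc' =>
      disjoint_left.mpr fun z hz hz' => (hlt z (hM.subset c hc hz) z (hN.subset c' hc' hz')).false
    rcases mem_union.mp hb with hb | hb <;> rcases mem_union.mp hb' with hb' | hb'
    · exact hM.disjoint b hb b' hb' hne
    · exact across b hb b' hb'
    · exact (across b' hb' b hb).symm
    · exact hN.disjoint b hb b' hb' hne
  exists_mem x hx := by
    rcases mem_union.mp hx with hx | hx
    · obtain ⟨b, hb, hxb⟩ := hM.exists_mem x hx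
      exact ⟨b, mem_union_left _ hb, hxb⟩
    · obtain ⟨b, hb, hxb⟩ := hN.exists_mem x hx
      exact ⟨b, mem_union_right _ hb, hxb⟩
  noncrossing i j k l hik hjl hij hjk hkl := by
    rcases mem_union.mp hik with hik | hik <;> rcases mem_union.mp hjl with hjl | hjl
    · exact hM.noncrossing i j k l hik hjl hij hjk hkl
    · exact (hlt k (hM.subset _ hik (by simp)) j (hN.subset _ hjl (by simp))).not_gt hjk
    · exact (hlt j (hM.subset _ hjl (by simp)) i (hN.subset _ hik (by simp))).not_gt hij
    · exact hN.noncrossing i j k l hik hjl hij hjk hkl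

protected lemma neg (hM : IsNCMatching s M) : IsNCMatching (-s) (-M) where
  card_eq_two b hb := by
    rw [← card_neg]
    exact hM.card_eq_two _ (mem_neg'.mp hb)
  subset b hb := by
    simpa using neg_subset_neg (hM.subset _ (mem_neg'.mp hb))
  disjoint b hb b' hb' hne := by
    have := hM.disjoint _ (mem_neg'.mp hb) _ (mem_neg'.mp hb') (by simpa using hne)
    exact disjoint_left.mpr fun z hz hz' =>
      disjoint_left.mp this (neg_mem_neg hz) (neg_mem_neg hz')
  exists_mem x hx := by
    obtain ⟨b, hb, hxb⟩ := hM.exists_mem (-x) (mem_neg'.mp hx)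
    exact ⟨-b, by simpa using hb, by simpa using hxb⟩
  noncrossing i j k l hik hjl hij hjk hkl := by
    have h₁ : ({-k, -i} : Finset ℤ) ∈ M := by simpa [pair_comm] using mem_neg'.mp hik
    have h₂ : ({-l, -j} : Finset ℤ) ∈ M := by simpa [pair_comm] using mem_neg'.mp hjl
    exact hM.noncrossing (-l) (-k) (-j) (-i) h₂ h₁ (by omega) (by omega) (by omega)

lemma restrict (hM : IsNCMatching s M) {u : Finset ℤ} (hu : ∀ b ∈ M, ∀ x ∈ b, x ∈ u → b ⊆ u) :
    IsNCMatching (s ∩ u) (M.filter (· ⊆ u)) where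
  card_eq_two b hb := hM.card_eq_two b (mem_filter.mp hb).1
  subset b hb := subset_inter (hM.subset b (mem_filter.mp hb).1) (mem_filter.mp hb).2
  disjoint b hb b' hb' := hM.disjoint b (mem_filter.mp hb).1 b' (mem_filter.mp hb').1
  exists_mem x hx := by
    obtain ⟨b, hb, hxb⟩ := hM.exists_mem x (mem_inter.mp hx).1
    exact ⟨b, mem_filter.mpr ⟨hb, hu b hb x hxb (mem_inter.mp hx).2⟩, hxb⟩
  noncrossing i j k l hik hjl := hM.noncrossing i j k l (mem_filter.mp hik).1 (mem_filter.mp hjl).1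

protected lemma erase (hM : IsNCMatching s M) {b : Finset ℤ} (hb : b ∈ M) :
    IsNCMatching (s \ b) (M.erase b) where
  card_eq_two c hc := hM.card_eq_two c (mem_of_mem_erase hc)
  subset c hc := subset_sdiff.mpr ⟨hM.subset c (mem_of_mem_erase hc),
    hM.disjoint c (mem_of_mem_erase hc) b hb (ne_of_mem_erase hc)⟩
  disjoint c hc c' hc' := hM.disjoint c (mem_of_mem_erase hc) c' (mem_of_mem_erase hc')
  exists_mem x hx := by
    obtain ⟨c, hc, hxc⟩ := hM.exists_mem x (mem_sdiff.mp hx).1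
    exact ⟨c, mem_erase.mpr ⟨fun h => (mem_sdiff.mp hx).2 (h ▸ hxc), hc⟩, hxc⟩
  noncrossing i j k l hik hjl :=
    hM.noncrossing i j k l (mem_of_mem_erase hik) (mem_of_mem_erase hjl)

lemma filter_subset_eq_self (hM : IsNCMatching s M) : M.filter (· ⊆ s) = M :=
  filter_true_of_mem hM.subset

lemma filter_subset_eq_empty (hM : IsNCMatching s M) {u : Finset ℤ} (hsu : Disjoint s u) :
    M.filter (· ⊆ u) = ∅ := by
  refine filter_false_of_mem fun b hb hbu => ?_
  obtain ⟨x, hx⟩ := card_pos.mp ((hM.card_eq_two b hb).symm ▸ two_pos)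
  exact disjoint_left.mp hsu (hM.subset b hb hx) (hbu hx)

end IsNCMatching

open Classical in
noncomputable def ncMatchings (s : Finset ℤ) : Finset (Finset (Finset ℤ)) :=
  s.powerset.powerset.filter (IsNCMatching s)

lemma mem_ncMatchings {s : Finset ℤ} {M : Finset (Finset ℤ)} :
    M ∈ ncMatchings s ↔ IsNCMatching s M := by
  simp only [ncMatchings, mem_filter, mem_powerset, and_iff_right_iff_imp]
  exact fun hM b hb => mem_powerset.mpr (hM.subset b hb)

lemma ncMatchings_empty : ncMatchings ∅ = {∅} := by
  ext M
  rw [mem_ncMatchings, mem_singleton]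
  refine ⟨fun hM => eq_empty_of_forall_notMem fun b hb => ?_, ?_⟩
  · have := hM.card_eq_two b hb
    rw [subset_empty.mp (hM.subset b hb)] at this
    simp at this
  · rintro rfl
    exact ⟨by simp, by simp, by simp, by simp, by simp⟩

lemma ncMatchings_eq_empty_of_not_even {s : Finset ℤ} (hs : ¬Even #s) : ncMatchings s = ∅ :=
  eq_empty_of_forall_notMem fun _ hM => hs (mem_ncMatchings.mp hM).even_card

namespace IsNCMatching

variable {a b t : ℤ} {M : Finset (Finset ℤ)}

lemma Ico_block_cases (hM : IsNCMatching (Ico a b) M) (hat : a < t) (hta : {a, t} ∈ M)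
    {c : Finset ℤ} (hc : c ∈ M) : c = {a, t} ∨ c ⊆ Ico (a + 1) t ∨ c ⊆ Ico (t + 1) b := by
  by_cases hne : c = {a, t}
  · exact Or.inl hne
  have hcs := hM.subset c hc
  right
  rcases hM.subset_Ioo_or_disjoint_Icc hat hta hc hne with h | h
  · left
    intro x hx
    have := mem_Ioo.mp (h hx)
    exact mem_Ico.mpr (by omega)
  · right
    intro x hx
    have h₁ := mem_Ico.mp (hcs hx)
    have h₂ : x ∉ Icc a t := disjoint_left.mp h hx
    rw [mem_Icc] at h₂
    exact mem_Ico.mpr (by omega)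

lemma Ico_restrict_left (hM : IsNCMatching (Ico a b) M) (hat : a < t) (hta : {a, t} ∈ M) :
    IsNCMatching (Ico (a + 1) t) (M.filter (· ⊆ Ico (a + 1) t)) := by
  have htb : t < b := (mem_Ico.mp (hM.subset _ hta (by simp))).2
  have := hM.restrict (u := Ico (a + 1) t) fun c hc x hxc hx => by
    rcases hM.Ico_block_cases hat hta hc with rfl | h | h
    · simp only [mem_insert, mem_singleton, mem_Ico] at hxc hx
      omega
    · exact h
    · have := mem_Ico.mp (h hxc)
      have := mem_Ico.mp hx
      omega
  rwa [Ico_inter_Ico, max_eq_right (by omega), min_eq_right htb.le] at this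

lemma Ico_restrict_right (hM : IsNCMatching (Ico a b) M) (hat : a < t) (hta : {a, t} ∈ M) :
    IsNCMatching (Ico (t + 1) b) (M.filter (· ⊆ Ico (t + 1) b)) := by
  have := hM.restrict (u := Ico (t + 1) b) fun c hc x hxc hx => by
    rcases hM.Ico_block_cases hat hta hc with rfl | h | h
    · simp only [mem_insert, mem_singleton, mem_Ico] at hxc hx
      omega
    · have := mem_Ico.mp (h hxc)
      have := mem_Ico.mp hx
      omega
    · exact h
  rwa [Ico_inter_Ico, max_eq_right (by omega), min_self] at this

lemma Ico_eq_insert_union (hM : IsNCMatching (Ico a b) M) (hat : a < t) (hta : {a, t} ∈ M) :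
    M = insert {a, t} (M.filter (· ⊆ Ico (a + 1) t) ∪ M.filter (· ⊆ Ico (t + 1) b)) := by
  ext c
  simp only [mem_insert, mem_union, mem_filter]
  constructor
  · intro hc
    rcases hM.Ico_block_cases hat hta hc with h | h | h
    exacts [Or.inl h, Or.inr (Or.inl ⟨hc, h⟩), Or.inr (Or.inr ⟨hc, h⟩)]
  · rintro (rfl | ⟨hc, -⟩ | ⟨hc, -⟩) <;> assumption

lemma Ico_join {M₁ M₂ : Finset (Finset ℤ)} (h₁ : IsNCMatching (Ico (a + 1) t) M₁)
    (h₂ : IsNCMatching (Ico (t + 1) b) M₂) (hat : a < t) (htb : t < b) :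
    IsNCMatching (Ico a b) (insert {a, t} (M₁ ∪ M₂)) := by
  have h := (h₁.union h₂ fun x hx y hy => by
      have := mem_Ico.mp hx; have := mem_Ico.mp hy; omega).insert hat
    (by simp; omega) (by simp) fun c hc => by
      rcases mem_union.mp hc with hc | hc
      · exact Or.inl fun x hx => by
          have := mem_Ico.mp (h₁.subset c hc hx); exact mem_Ioo.mpr (by omega)
      · exact Or.inr <| disjoint_left.mpr fun x hx => by
          have := mem_Ico.mp (h₂.subset c hc hx); rw [mem_Icc]; omega
  convert h using 1
  ext x
  simp only [mem_insert, mem_union, mem_Ico]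
  omega

end IsNCMatching

lemma card_filter_pair_mem_ncMatchings_Ico {a b t : ℤ} (hat : a < t) (htb : t < b) :
    #((ncMatchings (Ico a b)).filter ({a, t} ∈ ·)) =
      #(ncMatchings (Ico (a + 1) t)) * #(ncMatchings (Ico (t + 1) b)) := by
  rw [← card_product]
  refine card_nbij' (fun M => (M.filter (· ⊆ Ico (a + 1) t), M.filter (· ⊆ Ico (t + 1) b)))
    (fun p => insert {a, t} (p.1 ∪ p.2)) ?_ ?_ ?_ ?_
  · intro M hM
    simp only [mem_coe, mem_filter, mem_ncMatchings] at hM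
    simp only [mem_coe, mem_product, mem_ncMatchings]
    exact ⟨hM.1.Ico_restrict_left hat hM.2, hM.1.Ico_restrict_right hat hM.2⟩
  · intro p hp
    simp only [mem_coe, mem_product, mem_ncMatchings] at hp
    simp only [mem_coe, mem_filter, mem_ncMatchings]
    exact ⟨IsNCMatching.Ico_join hp.1 hp.2 hat htb, mem_insert_self _ _⟩
  · intro M hM
    simp only [mem_coe, mem_filter, mem_ncMatchings] at hM
    exact (hM.1.Ico_eq_insert_union hat hM.2).symm
  · rintro ⟨M₁, M₂⟩ hp
    simp only [mem_coe, mem_product, mem_ncMatchings] at hp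
    have hdisj₁ : Disjoint (Ico (t + 1) b) (Ico (a + 1) t) :=
      disjoint_left.mpr fun x hx hx' => by simp only [mem_Ico] at hx hx'; omega
    have hdisj₂ : Disjoint (Ico (a + 1) t) (Ico (t + 1) b) := hdisj₁.symm
    have hout₁ : ¬({a, t} : Finset ℤ) ⊆ Ico (a + 1) t := fun h => by
      have := mem_Ico.mp (h (mem_insert_self a _)); omega
    have hout₂ : ¬({a, t} : Finset ℤ) ⊆ Ico (t + 1) b := fun h => by
      have := mem_Ico.mp (h (mem_insert_self a _)); omega
    simp only [filter_insert, hout₁, hout₂, if_false, filter_union,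
      hp.1.filter_subset_eq_self, hp.2.filter_subset_eq_self,
      hp.1.filter_subset_eq_empty hdisj₂, hp.2.filter_subset_eq_empty hdisj₁,
      union_empty, empty_union]

lemma card_ncMatchings_Ico_eq_sum {a b : ℤ} (hab : a < b) :
    #(ncMatchings (Ico a b)) =
      ∑ t ∈ Ioo a b, #(ncMatchings (Ico (a + 1) t)) * #(ncMatchings (Ico (t + 1) b)) := by
  rw [← sum_congr rfl fun t ht =>
    card_filter_pair_mem_ncMatchings_Ico (mem_Ioo.mp ht).1 (mem_Ioo.mp ht).2, ← card_biUnion]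
  · congr 1
    ext M
    simp only [mem_biUnion, mem_filter]
    refine ⟨fun hM => ?_, fun ⟨_, _, hM, _⟩ => hM⟩
    obtain ⟨t, ht, hta, hM'⟩ := (mem_ncMatchings.mp hM).exists_pair_mem (mem_Ico.mpr ⟨le_rfl, hab⟩)
    have := mem_Ico.mp ht
    exact ⟨t, mem_Ioo.mpr (by omega), hM, hM'⟩
  · intro t ht t' _ hne
    have hat := (mem_Ioo.mp (mem_coe.mp ht)).1
    have hpair : ({a, t} : Finset ℤ) ≠ {a, t'} := fun h => by
      have htt' : t ∈ ({a, t'} : Finset ℤ) := h ▸ by simp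
      simp only [mem_insert, mem_singleton] at htt'
      omega
    refine disjoint_left.mpr fun M hM hM' => ?_
    have hM := mem_filter.mp hM
    have hM' := mem_filter.mp hM'
    have h := (mem_ncMatchings.mp hM.1).disjoint _ hM.2 _ hM'.2 hpair
    exact disjoint_left.mp h (mem_insert_self a _) (mem_insert_self a _)

theorem card_ncMatchings_Ico_add_two_mul (n : ℕ) (a : ℤ) :
    #(ncMatchings (Ico a (a + 2 * n))) = catalan n := by
  induction n using Nat.strong_induction_on generalizing a with
  | _ n ih =>
  rcases n with _ | n
  · simp [ncMatchings_empty]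
  -- only partners `t = a + 2i + 1` of `a` contribute: otherwise `Ico (a + 1) t` has odd size
  rw [card_ncMatchings_Ico_eq_sum (by omega), catalan_succ',
    ← sum_subset (s₁ := (antidiagonal n).image fun ij => a + 2 * ij.1 + 1), sum_image]
  · refine sum_congr rfl fun ij hij => ?_
    rw [HasAntidiagonal.mem_antidiagonal] at hij
    rw [← ih ij.1 (by omega) (a + 1), ← ih ij.2 (by omega) (a + 2 * ij.1 + 1 + 1)]
    congr 4 <;> push_cast <;> omega
  · intro ij hij ij' hij' h
    rw [mem_coe, HasAntidiagonal.mem_antidiagonal] at hij hij'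
    simp only at h
    ext <;> omega
  · intro t ht
    obtain ⟨ij, hij, rfl⟩ := mem_image.mp ht
    rw [HasAntidiagonal.mem_antidiagonal] at hij
    exact mem_Ioo.mpr (by push_cast; omega)
  · intro t ht hodd
    rw [ncMatchings_eq_empty_of_not_even, card_empty, zero_mul]
    rw [Int.card_Ico, Nat.even_iff]
    intro heven
    have := mem_Ioo.mp ht
    refine hodd (mem_image.mpr ⟨(((t - a - 1) / 2).toNat, n - ((t - a - 1) / 2).toNat), ?_, ?_⟩)
    · rw [HasAntidiagonal.mem_antidiagonal]
      omega
    · simp only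
      omega

noncomputable def pmFinset (m : ℕ) : Finset ℤ := -Icc 1 (m : ℤ) ∪ Icc 1 (m : ℤ)

lemma mem_pmFinset {m : ℕ} {x : ℤ} : x ∈ pmFinset m ↔ x ≠ 0 ∧ -m ≤ x ∧ x ≤ m := by
  simp only [pmFinset, mem_union, mem_neg', mem_Icc]
  omega

lemma coe_pmFinset (m : ℕ) : (pmFinset m : Set ℤ) = pmSet m := by
  ext x
  simp [mem_pmFinset, pmSet, abs_le]

lemma isNCSP_iff {m : ℕ} {M : Finset (Finset ℤ)} :
    IsNCSP m M ↔ IsNCMatching (pmFinset m) M ∧ ∀ b ∈ M, -b ∈ M := by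
  simp only [IsNCSP, ← coe_pmFinset, coe_subset, mem_coe]
  constructor
  · rintro ⟨h₁, h₂, h₃, h₄, h₅⟩
    exact ⟨⟨fun b hb => (h₁ b hb).1, fun b hb => (h₁ b hb).2, h₂, h₃, h₅⟩, h₄⟩
  · rintro ⟨hM, h₄⟩
    exact ⟨fun b hb => ⟨hM.card_eq_two b hb, hM.subset b hb⟩, hM.disjoint, hM.exists_mem, h₄,
      hM.noncrossing⟩

lemma ncard_trivialBlocks_le_one_iff {M : Finset (Finset ℤ)} :
    {b : Finset ℤ | b ∈ M ∧ ∃ i : ℤ, b = {i, -i}}.ncard ≤ 1 ↔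
      ∀ i j : ℤ, {i, -i} ∈ M → {j, -j} ∈ M → ({i, -i} : Finset ℤ) = {j, -j} := by
  rw [Set.ncard_le_one (M.finite_toSet.subset fun b hb => hb.1)]
  constructor
  · intro h i j hi hj
    exact h _ ⟨hi, i, rfl⟩ _ ⟨hj, j, rfl⟩
  · rintro h _ ⟨hb, i, rfl⟩ _ ⟨hb', j, rfl⟩
    exact h i j hb hb'

namespace IsNCSP

variable {m : ℕ} {M : Finset (Finset ℤ)}

lemma isNCMatching (hM : IsNCSP m M) : IsNCMatching (pmFinset m) M := (isNCSP_iff.mp hM).1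

lemma neg_mem (hM : IsNCSP m M) {b : Finset ℤ} (hb : b ∈ M) : -b ∈ M := (isNCSP_iff.mp hM).2 b hb

lemma block_cases (hM : IsNCSP m M) {b : Finset ℤ} (hb : b ∈ M) :
    (∀ x ∈ b, 0 < x) ∨ (∀ x ∈ b, x < 0) ∨ ∃ t, 0 < t ∧ b = {t, -t} := by
  have hN := hM.isNCMatching
  obtain ⟨u, v, huv, rfl⟩ := exists_lt_and_eq_pair_of_card_eq_two (hN.card_eq_two _ hb)
  have hu := mem_pmFinset.mp (hN.subset _ hb (mem_insert_self u _))
  have hv := mem_pmFinset.mp (hN.subset _ hb (by simp : v ∈ ({u, v} : Finset ℤ)))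
  have hb' : ({-v, -u} : Finset ℤ) ∈ M := by
    simpa [neg_insert, pair_comm] using hM.neg_mem hb
  have h₁ : ¬(-v < u ∧ u < -u ∧ -u < v) := fun h => hN.noncrossing _ _ _ _ hb' hb h.1 h.2.1 h.2.2
  have h₂ : ¬(u < -v ∧ -v < v ∧ v < -u) := fun h => hN.noncrossing _ _ _ _ hb hb' h.1 h.2.1 h.2.2
  by_cases huv' : u = -v
  · exact Or.inr (Or.inr ⟨v, by omega, by rw [huv', pair_comm]⟩)
  · simp only [mem_insert, mem_singleton, forall_eq_or_imp, forall_eq]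
    omega

end IsNCSP

def foldMatching (M : Finset (Finset ℤ)) : Finset (Finset ℤ) :=
  (M.filter fun b => ∃ x ∈ b, 0 < x).image (image (max · 0))

def unfoldMatching (M : Finset (Finset ℤ)) : Finset (Finset ℤ) :=
  M.biUnion fun c => if 0 ∈ c then {(c ∪ -c).erase 0} else {c, -c}

lemma mem_foldMatching {m : ℕ} {M : Finset (Finset ℤ)} (hM : IsNCSP m M) {c : Finset ℤ} :
    c ∈ foldMatching M ↔ (c ∈ M ∧ ∀ x ∈ c, 0 < x) ∨ ∃ t, 0 < t ∧ {t, -t} ∈ M ∧ c = {0, t} := by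
  have image_of_pos {b : Finset ℤ} (hb : ∀ x ∈ b, 0 < x) : b.image (max · 0) = b :=
    (image_congr fun x hx => max_eq_left (hb x hx).le).trans image_id'
  have image_pair {t : ℤ} (ht : 0 < t) : ({t, -t} : Finset ℤ).image (max · 0) = {0, t} := by
    rw [image_insert, image_singleton, max_eq_left ht.le, max_eq_right (by omega), pair_comm]
  simp only [foldMatching, mem_image, mem_filter]
  constructor
  · rintro ⟨b, ⟨hb, x, hxb, hx⟩, rfl⟩
    rcases hM.block_cases hb with h | h | ⟨t, ht, rfl⟩
    · rw [image_of_pos h]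
      exact Or.inl ⟨hb, h⟩
    · exact absurd (h x hxb) hx.not_gt
    · exact Or.inr ⟨t, ht, hb, image_pair ht⟩
  · rintro (⟨hc, hpos⟩ | ⟨t, ht, htM, rfl⟩)
    · obtain ⟨x, hx⟩ := card_pos.mp ((hM.isNCMatching.card_eq_two c hc).symm ▸ two_pos)
      exact ⟨c, ⟨hc, x, hx, hpos x hx⟩, image_of_pos hpos⟩
    · exact ⟨{t, -t}, ⟨htM, t, by simp, ht⟩, image_pair ht⟩

lemma IsNCMatching.forall_pos_or_eq_zero_pair {s : Finset ℤ} {M : Finset (Finset ℤ)}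
    (hM : IsNCMatching s M) (hs : ∀ x ∈ s, 0 ≤ x) {c : Finset ℤ} (hc : c ∈ M) :
    (∀ x ∈ c, 0 < x) ∨ ∃ t, 0 < t ∧ c = {0, t} := by
  by_cases h0 : 0 ∈ c
  · obtain ⟨u, v, huv, rfl⟩ := Finset.card_eq_two.mp (hM.card_eq_two c hc)
    have hu := hs u (hM.subset _ hc (by simp))
    have hv := hs v (hM.subset _ hc (by simp))
    simp only [mem_insert, mem_singleton] at h0
    rcases h0 with rfl | rfl
    · exact Or.inr ⟨v, by omega, rfl⟩
    · exact Or.inr ⟨u, by omega, pair_comm _ _⟩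
  · exact Or.inl fun x hx => lt_of_le_of_ne (hs x (hM.subset c hc hx)) fun h => h0 (h ▸ hx)

lemma erase_zero_union_neg_pair {t : ℤ} (ht : t ≠ 0) :
    ((({0, t} : Finset ℤ) ∪ -{0, t}).erase 0) = {t, -t} := by
  ext x
  simp only [mem_erase, mem_union, mem_insert, mem_singleton, mem_neg']
  omega

lemma mem_unfoldMatching {M : Finset (Finset ℤ)}
    (hM : ∀ c ∈ M, (∀ x ∈ c, 0 < x) ∨ ∃ t, 0 < t ∧ c = {0, t}) {b : Finset ℤ} :
    b ∈ unfoldMatching M ↔ (b ∈ M ∧ ∀ x ∈ b, 0 < x) ∨ (-b ∈ M ∧ ∀ x ∈ b, x < 0) ∨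
      ∃ t, 0 < t ∧ {0, t} ∈ M ∧ b = {t, -t} := by
  simp only [unfoldMatching, mem_biUnion]
  constructor
  · rintro ⟨c, hc, hbc⟩
    rcases hM c hc with hpos | ⟨t, ht, rfl⟩
    · rw [if_neg fun h => (hpos 0 h).false, mem_insert, mem_singleton] at hbc
      rcases hbc with rfl | rfl
      · exact Or.inl ⟨hc, hpos⟩
      · exact Or.inr (Or.inl ⟨by rwa [neg_neg], fun x hx => by
          have := hpos (-x) (mem_neg'.mp hx); omega⟩)
    · rw [if_pos (by simp), mem_singleton, erase_zero_union_neg_pair ht.ne'] at hbc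
      exact Or.inr (Or.inr ⟨t, ht, hc, hbc⟩)
  · rintro (⟨hb, hpos⟩ | ⟨hb, hneg⟩ | ⟨t, ht, htM, rfl⟩)
    · exact ⟨b, hb, by rw [if_neg fun h => (hpos 0 h).false]; simp⟩
    · refine ⟨-b, hb, ?_⟩
      rw [if_neg fun h => (hneg 0 (by simpa using mem_neg'.mp h)).false, neg_neg]
      simp
    · exact ⟨{0, t}, htM, by rw [if_pos (by simp), erase_zero_union_neg_pair ht.ne']; simp⟩

lemma unfoldMatching_insert_zero_pair {t : ℤ} (ht : t ≠ 0) (M : Finset (Finset ℤ)) :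
    unfoldMatching (insert {0, t} M) = insert {t, -t} (unfoldMatching M) := by
  rw [unfoldMatching, biUnion_insert, if_pos (mem_insert_self 0 _), erase_zero_union_neg_pair ht]
  rfl

lemma unfoldMatching_of_forall_zero_notMem {M : Finset (Finset ℤ)} (h0 : ∀ c ∈ M, 0 ∉ c) :
    unfoldMatching M = -M ∪ M := by
  rw [unfoldMatching, biUnion_congr rfl fun c hc => if_neg (h0 c hc)]
  ext b
  simp only [mem_biUnion, mem_insert, mem_singleton, mem_union, mem_neg']
  constructor
  · rintro ⟨c, hc, rfl | rfl⟩
    exacts [Or.inr hc, Or.inl (by rwa [neg_neg])]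
  · rintro (hb | hb)
    exacts [⟨-b, hb, Or.inr (neg_neg b).symm⟩, ⟨b, hb, Or.inl rfl⟩]

lemma neg_subset_Ioo_or_disjoint_Icc {c : Finset ℤ} {t : ℤ}
    (h : c ⊆ Ioo (-t) t ∨ Disjoint c (Icc (-t) t)) :
    -c ⊆ Ioo (-t) t ∨ Disjoint (-c) (Icc (-t) t) := by
  rcases h with h | h
  · refine Or.inl fun x hx => ?_
    have := mem_Ioo.mp (h (mem_neg'.mp hx))
    exact mem_Ioo.mpr (by omega)
  · refine Or.inr (disjoint_left.mpr fun x hx hx' => disjoint_left.mp h (mem_neg'.mp hx) ?_)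
    rw [mem_Icc] at hx' ⊢
    omega

lemma subset_Ioo_or_disjoint_Icc_neg_iff {c : Finset ℤ} (hc : ∀ x ∈ c, 0 < x) {t : ℤ} :
    c ⊆ Ioo (-t) t ∨ Disjoint c (Icc (-t) t) ↔ c ⊆ Ioo 0 t ∨ Disjoint c (Icc 0 t) := by
  simp only [subset_iff, disjoint_left, mem_Ioo, mem_Icc]
  constructor <;> rintro (h | h)
  · exact Or.inl fun x hx => ⟨hc x hx, (h hx).2⟩
  · exact Or.inr fun x hx hx' => h hx ⟨by linarith [hc x hx], hx'.2⟩
  · exact Or.inl fun x hx => ⟨by linarith [(h hx).1, (h hx).2], (h hx).2⟩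
  · exact Or.inr fun x hx hx' => h hx ⟨(hc x hx).le, hx'.2⟩

lemma IsNCMatching.isNCMatching_unfoldMatching_Ico_zero {m : ℕ} {M : Finset (Finset ℤ)}
    (hM : IsNCMatching (Ico 0 (m + 1)) M) : IsNCMatching (pmFinset m) (unfoldMatching M) := by
  obtain ⟨t, hts, ht0, htM⟩ := hM.exists_pair_mem (mem_Ico.mpr ⟨le_rfl, by omega⟩)
  have ht := mem_Ico.mp hts
  have hN := hM.erase htM
  have hN_pos : ∀ x ∈ Ico (0 : ℤ) (m + 1) \ {0, t}, 0 < x := fun x hx => by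
    simp only [mem_sdiff, mem_Ico, mem_insert, mem_singleton] at hx
    omega
  have hsymm := hN.neg.union hN fun x hx y hy => by
    have := hN_pos (-x) (mem_neg'.mp hx)
    have := hN_pos y hy
    omega
  have hsep : ∀ c ∈ -(M.erase {0, t}) ∪ M.erase {0, t},
      c ⊆ Ioo (-t) t ∨ Disjoint c (Icc (-t) t) := by
    have hpos (c) (hc : c ∈ M.erase {0, t}) : c ⊆ Ioo (-t) t ∨ Disjoint c (Icc (-t) t) :=
      (subset_Ioo_or_disjoint_Icc_neg_iff fun x hx => hN_pos x (hN.subset c hc hx)).mpr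
        (hM.subset_Ioo_or_disjoint_Icc (by omega) htM (mem_of_mem_erase hc) (ne_of_mem_erase hc))
    intro c hc
    rcases mem_union.mp hc with hc | hc
    · simpa using neg_subset_Ioo_or_disjoint_Icc (hpos _ (mem_neg'.mp hc))
    · exact hpos c hc
  have h := hsymm.insert (x := -t) (y := t) (by omega) (by simp [mem_neg']; omega)
    (by simp; omega) hsep
  rw [← insert_erase htM, unfoldMatching_insert_zero_pair ht0,
    unfoldMatching_of_forall_zero_notMem fun c hc h0 => ?_, pair_comm]
  · convert h using 1
    ext x
    simp only [mem_pmFinset, mem_insert, mem_union, mem_neg', mem_sdiff, mem_Ico, mem_singleton]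
    omega
  · exact disjoint_left.mp (hM.disjoint _ (mem_of_mem_erase hc) _ htM (ne_of_mem_erase hc)) h0
      (mem_insert_self 0 _)

lemma IsNCMatching.isNCMatching_unfoldMatching_Ico_one {m : ℕ} {M : Finset (Finset ℤ)}
    (hM : IsNCMatching (Ico 1 (m + 1)) M) : IsNCMatching (pmFinset m) (unfoldMatching M) := by
  have h := hM.neg.union hM fun x hx y hy => by
    have := mem_Ico.mp (mem_neg'.mp hx)
    have := mem_Ico.mp hy
    omega
  rw [unfoldMatching_of_forall_zero_notMem fun c hc h0 => by
    have := mem_Ico.mp (hM.subset c hc h0); omega]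
  convert h using 1
  ext x
  simp only [mem_pmFinset, mem_union, mem_neg', mem_Ico]
  omega

lemma eq_of_pair_neg_eq_pair_neg {i j : ℤ} (hi : 0 < i) (hj : 0 < j)
    (h : ({i, -i} : Finset ℤ) = {j, -j}) : i = j := by
  have : i ∈ ({j, -j} : Finset ℤ) := h ▸ mem_insert_self i _
  simp only [mem_insert, mem_singleton] at this
  omega

lemma neg_mem_unfoldMatching {M : Finset (Finset ℤ)}
    (hM : ∀ c ∈ M, (∀ x ∈ c, 0 < x) ∨ ∃ t, 0 < t ∧ c = {0, t}) {b : Finset ℤ}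
    (hb : b ∈ unfoldMatching M) : -b ∈ unfoldMatching M := by
  rw [mem_unfoldMatching hM] at hb ⊢
  rcases hb with ⟨hb, hpos⟩ | ⟨hb, hneg⟩ | ⟨t, ht, htM, rfl⟩
  · exact Or.inr (Or.inl ⟨by rwa [neg_neg], fun x hx => by
      have := hpos (-x) (mem_neg'.mp hx); omega⟩)
  · exact Or.inl ⟨hb, fun x hx => by have := hneg (-x) (mem_neg'.mp hx); omega⟩
  · exact Or.inr (Or.inr ⟨t, ht, htM, by simp [neg_insert, pair_comm]⟩)

lemma exists_zero_pair_mem_of_pair_neg_mem_unfoldMatching {M : Finset (Finset ℤ)}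
    (hM : ∀ c ∈ M, (∀ x ∈ c, 0 < x) ∨ ∃ t, 0 < t ∧ c = {0, t}) {i : ℤ}
    (hi : {i, -i} ∈ unfoldMatching M) :
    ∃ t, 0 < t ∧ {0, t} ∈ M ∧ ({i, -i} : Finset ℤ) = {t, -t} := by
  rcases (mem_unfoldMatching hM).mp hi with ⟨-, hpos⟩ | ⟨-, hneg⟩ | h
  · have := hpos i (by simp)
    have := hpos (-i) (by simp)
    omega
  · have := hneg i (by simp)
    have := hneg (-i) (by simp)
    omega
  · exact h

lemma IsNCMatching.isNCSP_unfoldMatching {m : ℕ} {lo : ℤ} {M : Finset (Finset ℤ)}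
    (hM : IsNCMatching (Ico lo (m + 1)) M) (hlo : lo = 0 ∨ lo = 1) :
    IsNCSP m (unfoldMatching M) := by
  have hform (c) (hc : c ∈ M) := hM.forall_pos_or_eq_zero_pair
    (fun x hx => by have := mem_Ico.mp hx; omega) hc
  refine isNCSP_iff.mpr ⟨?_, fun b => neg_mem_unfoldMatching hform⟩
  rcases hlo with rfl | rfl
  exacts [hM.isNCMatching_unfoldMatching_Ico_zero, hM.isNCMatching_unfoldMatching_Ico_one]

lemma IsNCMatching.ncard_trivialBlocks_unfoldMatching_le_one {s : Finset ℤ}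
    {M : Finset (Finset ℤ)} (hM : IsNCMatching s M) (hs : ∀ x ∈ s, 0 ≤ x) :
    {b : Finset ℤ | b ∈ unfoldMatching M ∧ ∃ i : ℤ, b = {i, -i}}.ncard ≤ 1 := by
  have hform (c) (hc : c ∈ M) := hM.forall_pos_or_eq_zero_pair hs (c := c) hc
  refine ncard_trivialBlocks_le_one_iff.mpr fun i j hi hj => ?_
  obtain ⟨t, ht, htM, hit⟩ := exists_zero_pair_mem_of_pair_neg_mem_unfoldMatching hform hi
  obtain ⟨t', ht', htM', hjt'⟩ := exists_zero_pair_mem_of_pair_neg_mem_unfoldMatching hform hj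
  have htt' : ({0, t} : Finset ℤ) = {0, t'} := by
    by_contra hne
    exact disjoint_left.mp (hM.disjoint _ htM _ htM' hne) (mem_insert_self 0 _)
      (mem_insert_self 0 _)
  rw [hit, hjt', (eq_and_eq_of_pair_eq_pair ht ht' htt').2]

namespace IsNCSP

variable {m : ℕ} {M : Finset (Finset ℤ)}

lemma isNCMatching_filter_pos (hM : IsNCSP m M) :
    IsNCMatching ((Icc 1 (m : ℤ)).filter fun x => {x, -x} ∉ M)
      (M.filter fun b => ∀ x ∈ b, 0 < x) := by
  set u := (Icc 1 (m : ℤ)).filter fun x => {x, -x} ∉ M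
  have hN := hM.isNCMatching
  have hsub (b) (hb : b ∈ M) : b ⊆ u ↔ ∀ x ∈ b, 0 < x := by
    refine ⟨fun h x hx => ?_, fun h x hx => mem_filter.mpr ⟨?_, fun hx' => ?_⟩⟩
    · have := (mem_Icc.mp (mem_filter.mp (h hx)).1).1
      omega
    · exact mem_Icc.mpr ⟨h x hx, (mem_pmFinset.mp (hN.subset b hb hx)).2.2⟩
    · have hne : b ≠ {x, -x} := fun hb' => by
        have := h (-x) (hb' ▸ by simp)
        have := h x hx
        omega
      exact disjoint_left.mp (hN.disjoint _ hb _ hx' hne) hx (mem_insert_self x _)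
  have h := hN.restrict (u := u) fun b hb x hxb hxu => (hsub b hb).mpr <| by
    have hx := mem_filter.mp hxu
    rcases hM.block_cases hb with h | h | ⟨t, ht, rfl⟩
    · exact h
    · have := h x hxb
      have := (mem_Icc.mp hx.1).1
      omega
    · simp only [mem_insert, mem_singleton] at hxb
      have := (mem_Icc.mp hx.1).1
      obtain rfl : x = t := by omega
      exact absurd hb hx.2
  rwa [inter_eq_right.mpr fun x hx => mem_pmFinset.mpr (by
      have := mem_Icc.mp (mem_filter.mp hx).1; omega), filter_congr hsub] at h

lemma isNCMatching_foldMatching_of_pair_neg_mem (hM : IsNCSP m M)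
    (htriv : ∀ i j : ℤ, {i, -i} ∈ M → {j, -j} ∈ M → ({i, -i} : Finset ℤ) = {j, -j})
    {t : ℤ} (ht : 0 < t) (htM : {t, -t} ∈ M) :
    Odd m ∧ IsNCMatching (Ico 0 (m + 1)) (foldMatching M) := by
  have htm := (mem_pmFinset.mp (hM.isNCMatching.subset _ htM (mem_insert_self t _))).2.2
  have hu : (Icc 1 (m : ℤ)).filter (fun x => {x, -x} ∉ M) = (Icc 1 (m : ℤ)).erase t := by
    ext x
    simp only [mem_filter, mem_erase, mem_Icc]
    refine ⟨fun ⟨hx, hxM⟩ => ⟨fun hxt => hxM (hxt ▸ htM), hx⟩, fun ⟨hxt, hx⟩ => ⟨hx, fun hxM => ?_⟩⟩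
    exact hxt (eq_of_pair_neg_eq_pair_neg (by omega) ht (htriv x t hxM htM))
  have hP := hu ▸ hM.isNCMatching_filter_pos
  have hpar := hP.even_card
  rw [card_erase_of_mem (mem_Icc.mpr ⟨by omega, htm⟩), Int.card_Icc, Nat.even_iff] at hpar
  have hfold : foldMatching M = insert {0, t} (M.filter fun b => ∀ x ∈ b, 0 < x) := by
    ext c
    rw [mem_foldMatching hM, mem_insert, mem_filter]
    refine ⟨fun h => h.symm.imp (fun ⟨t', ht', ht'M, hc⟩ => ?_) id, fun h => h.symm.imp id
      fun hc => ⟨t, ht, htM, hc⟩⟩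
    rw [hc, eq_of_pair_neg_eq_pair_neg ht' ht (htriv t' t ht'M htM)]
  have h := hP.insert ht (by simp) (by simp) fun c hc => by
    have hpos := (mem_filter.mp hc).2
    refine (subset_Ioo_or_disjoint_Icc_neg_iff hpos).mp ?_
    refine hM.isNCMatching.subset_Ioo_or_disjoint_Icc (by omega) (pair_comm t (-t) ▸ htM)
      (mem_filter.mp hc).1 fun hc' => ?_
    have := hpos (-t) (hc' ▸ mem_insert_self _ _)
    omega
  refine ⟨Nat.odd_iff.mpr (by omega), hfold ▸ ?_⟩
  convert h using 1
  ext x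
  simp only [mem_Ico, mem_insert, mem_erase, mem_Icc]
  omega

lemma isNCMatching_foldMatching_of_forall_pair_neg_notMem (hM : IsNCSP m M)
    (htriv : ∀ t, 0 < t → {t, -t} ∉ M) :
    Even m ∧ IsNCMatching (Ico 1 (m + 1)) (foldMatching M) := by
  have hu : (Icc 1 (m : ℤ)).filter (fun x => {x, -x} ∉ M) = Icc 1 (m : ℤ) :=
    filter_true_of_mem fun x hx => htriv x (mem_Icc.mp hx).1
  have hP := hu ▸ hM.isNCMatching_filter_pos
  have hpar := hP.even_card
  rw [Int.card_Icc, Nat.even_iff] at hpar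
  have hfold : foldMatching M = M.filter fun b => ∀ x ∈ b, 0 < x := by
    ext c
    rw [mem_foldMatching hM, mem_filter]
    exact or_iff_left fun ⟨t, ht, htM, _⟩ => htriv t ht htM
  refine ⟨Nat.even_iff.mpr (by omega), hfold ▸ ?_⟩
  convert hP using 1
  ext x
  simp only [mem_Ico, mem_Icc]
  omega

lemma isNCMatching_foldMatching (hM : IsNCSP m M)
    (htriv : ∀ i j : ℤ, {i, -i} ∈ M → {j, -j} ∈ M → ({i, -i} : Finset ℤ) = {j, -j}) :
    IsNCMatching (Ico ((m + 1) % 2) (m + 1)) (foldMatching M) := by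
  by_cases htriv₀ : ∃ t, 0 < t ∧ {t, -t} ∈ M
  · obtain ⟨t, ht, htM⟩ := htriv₀
    obtain ⟨hm, h⟩ := hM.isNCMatching_foldMatching_of_pair_neg_mem htriv ht htM
    convert h using 3
    have := Nat.odd_iff.mp hm
    omega
  · push Not at htriv₀
    obtain ⟨hm, h⟩ := hM.isNCMatching_foldMatching_of_forall_pair_neg_notMem htriv₀
    convert h using 3
    have := Nat.even_iff.mp hm
    omega

end IsNCSP

lemma IsNCSP.unfoldMatching_foldMatching {m : ℕ} {M : Finset (Finset ℤ)} (hM : IsNCSP m M) :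
    unfoldMatching (foldMatching M) = M := by
  have hform (c) (hc : c ∈ foldMatching M) : (∀ x ∈ c, 0 < x) ∨ ∃ t, 0 < t ∧ c = {0, t} := by
    rcases (mem_foldMatching hM).mp hc with ⟨-, h⟩ | ⟨t, ht, -, rfl⟩
    exacts [Or.inl h, Or.inr ⟨t, ht, rfl⟩]
  ext b
  simp only [mem_unfoldMatching hform, mem_foldMatching hM]
  constructor
  · rintro (⟨⟨hb, -⟩ | ⟨t, -, -, rfl⟩, hpos⟩ | ⟨⟨hb, -⟩ | ⟨t, -, -, hb⟩, hneg⟩ |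
        ⟨t, ht, ⟨-, hpos⟩ | ⟨t', ht', htM, h⟩, rfl⟩)
    · exact hb
    · exact absurd (hpos 0 (mem_insert_self 0 _)) (lt_irrefl 0)
    · simpa using hM.neg_mem hb
    · have := hneg 0 (by simpa using (hb ▸ mem_insert_self 0 {t} : 0 ∈ -b))
      omega
    · exact absurd (hpos 0 (mem_insert_self 0 _)) (lt_irrefl 0)
    · rwa [(eq_and_eq_of_pair_eq_pair ht ht' h).2]
  · intro hb
    rcases hM.block_cases hb with hpos | hneg | ⟨t, ht, rfl⟩
    · exact Or.inl ⟨Or.inl ⟨hb, hpos⟩, hpos⟩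
    · refine Or.inr (Or.inl ⟨Or.inl ⟨hM.neg_mem hb, fun x hx => ?_⟩, hneg⟩)
      have := hneg (-x) (mem_neg'.mp hx)
      omega
    · exact Or.inr (Or.inr ⟨t, ht, Or.inr ⟨t, ht, hb, rfl⟩, rfl⟩)

lemma IsNCMatching.foldMatching_unfoldMatching {m : ℕ} {s : Finset ℤ} {M : Finset (Finset ℤ)}
    (hM : IsNCMatching s M) (hs : ∀ x ∈ s, 0 ≤ x) (hunfold : IsNCSP m (unfoldMatching M)) :
    foldMatching (unfoldMatching M) = M := by
  have hform (c) (hc : c ∈ M) := hM.forall_pos_or_eq_zero_pair hs (c := c) hc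
  ext c
  rw [mem_foldMatching hunfold, mem_unfoldMatching hform]
  constructor
  · rintro (⟨⟨hc, -⟩ | ⟨hc, hneg⟩ | ⟨t, -, -, rfl⟩, hpos⟩ | ⟨t, ht, hc, rfl⟩)
    · exact hc
    · obtain ⟨x, hx⟩ := card_pos.mp ((hM.card_eq_two _ hc).symm ▸ two_pos)
      have := hneg (-x) (mem_neg'.mp hx)
      have := hpos (-x) (mem_neg'.mp hx)
      omega
    · have := hpos (-t) (by simp)
      have := hpos t (by simp)
      omega
    · rcases (mem_unfoldMatching hform).mp hc with ⟨-, hpos⟩ | ⟨-, hneg⟩ | ⟨t', ht', htM, h⟩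
      · have := hpos (-t) (by simp)
        omega
      · have := hneg t (by simp)
        omega
      · rwa [eq_of_pair_neg_eq_pair_neg ht ht' h]
  · intro hc
    rcases hform c hc with hpos | ⟨t, ht, rfl⟩
    · exact Or.inl ⟨Or.inl ⟨hc, hpos⟩, hpos⟩
    · exact Or.inr ⟨t, ht, (mem_unfoldMatching hform).mpr (Or.inr (Or.inr ⟨t, ht, hc, rfl⟩)), rfl⟩

theorem ncard_isNCSP_trivialBlocks_le_one (m : ℕ) :
    {M : Finset (Finset ℤ) | IsNCSP m M ∧
      {b : Finset ℤ | b ∈ M ∧ ∃ i : ℤ, b = {i, -i}}.ncard ≤ 1}.ncard = catalan ((m + 1) / 2) := by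
  have hlo : ((m : ℤ) + 1) % 2 = 0 ∨ ((m : ℤ) + 1) % 2 = 1 := by omega
  have hs : ∀ x ∈ Ico (((m : ℤ) + 1) % 2) (m + 1), 0 ≤ x := fun x hx => by
    have := mem_Ico.mp hx; omega
  set T := ncMatchings (Ico (((m : ℤ) + 1) % 2) (m + 1))
  have hT {M} (hM : M ∈ (T : Set (Finset (Finset ℤ)))) := mem_ncMatchings.mp (mem_coe.mp hM)
  have hS : {M : Finset (Finset ℤ) | IsNCSP m M ∧
      {b : Finset ℤ | b ∈ M ∧ ∃ i : ℤ, b = {i, -i}}.ncard ≤ 1} = unfoldMatching '' T := by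
    ext M
    constructor
    · rintro ⟨hM, htriv⟩
      refine ⟨foldMatching M, mem_ncMatchings.mpr ?_, hM.unfoldMatching_foldMatching⟩
      exact hM.isNCMatching_foldMatching (ncard_trivialBlocks_le_one_iff.mp htriv)
    · rintro ⟨M', hM', rfl⟩
      exact ⟨(hT hM').isNCSP_unfoldMatching hlo,
        (hT hM').ncard_trivialBlocks_unfoldMatching_le_one hs⟩
  have hinj : Set.InjOn unfoldMatching T := fun M₁ h₁ M₂ h₂ h => by
    rw [← (hT h₁).foldMatching_unfoldMatching hs ((hT h₁).isNCSP_unfoldMatching hlo),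
      ← (hT h₂).foldMatching_unfoldMatching hs ((hT h₂).isNCSP_unfoldMatching hlo), h]
  have hcard := card_ncMatchings_Ico_add_two_mul ((m + 1) / 2) (((m : ℤ) + 1) % 2)
  rw [show ((m : ℤ) + 1) % 2 + 2 * ((m + 1) / 2 : ℕ) = m + 1 by omega] at hcard
  rw [hS, hinj.ncard_image, Set.ncard_coe_finset, hcard]

/-- The number of symmetric noncrossing perfect matchings on `[±m]` with
at most one trivial block (a block of the form `{i, -i}`) equals the Catalan number
`C_k = C(2k, k)/(k+1)` where `k = ⌈m/2⌉`. -/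
theorem stmt_12 (m : ℕ) :
    (( (m + 1) / 2 + 1) *
      {M : Finset (Finset ℤ) | IsNCSP m M ∧
        {b : Finset ℤ | b ∈ M ∧ ∃ i : ℤ, b = {i, -i}}.ncard ≤ 1}.ncard)
    = Nat.choose (2 * ((m + 1) / 2)) ((m + 1) / 2) := by
  rw [ncard_isNCSP_trivialBlocks_le_one, succ_mul_catalan_eq_centralBinom,
    Nat.centralBinom_eq_two_mul_choose]
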